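/- arXiv:1909.04065 — 2 statements merged into one kernel-verified Lean document; each statement's English description precedes it below -/
import Mathlib

section
/- Theorem (games characterize strategy generation): Assume Z : Strat → ℝⁿ is injective and for every resource R the set S(R) = { Z(E) : E ∈ Strat, R ⪰ E } is nonempty, compact and convex. Then R outperforms R' at all linear games factoring through Z (i.e. for all linear F : ℝⁿ → ℝ, max over S(R) of F ≥ max over S(R') of F) if and only if every strategy E ∈ Strat with R' ⪰ E satisfies R ⪰ E. -/
/-!
A closed convex set is the intersection of the half-spaces containing it (Hahn–Banach), so a
nonempty compact convex set is determined by its support function `F ↦ sup F`: one support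
function dominates another exactly when the corresponding sets are nested. Since `Z` is
injective on strategies, nesting of the achievable sets `S R' ⊆ S R` is the same as nesting of
the sets of strategies generable from `R'` and from `R`.
-/

open Set

section SupportFunction

variable {E : Type*}

theorem Convex.subset_of_forall_sSup_image_le [AddCommGroup E] [Module ℝ E] [TopologicalSpace E]
    [IsTopologicalAddGroup E] [ContinuousSMul ℝ E] [LocallyConvexSpace ℝ E] {K K' : Set E}
    (hKconv : Convex ℝ K) (hKne : K.Nonempty) (hKclosed : IsClosed K) (hK' : IsCompact K')
    (h : ∀ F : StrongDual ℝ E, sSup (F '' K') ≤ sSup (F '' K)) : K' ⊆ K := by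
  intro p hp
  by_contra hpK
  obtain ⟨F, u, hFK, hFp⟩ := geometric_hahn_banach_closed_point hKconv hKclosed hpK
  have hsupK : sSup (F '' K) ≤ u :=
    csSup_le (hKne.image F) (forall_mem_image.2 fun a ha => (hFK a ha).le)
  have hFp_le : F p ≤ sSup (F '' K') :=
    le_csSup (hK'.image F.continuous).bddAbove (mem_image_of_mem F hp)
  linarith [h F]

theorem Convex.forall_sSup_image_le_iff_subset [NormedAddCommGroup E] [NormedSpace ℝ E]
    [FiniteDimensional ℝ E] {K K' : Set E} (hKconv : Convex ℝ K) (hKne : K.Nonempty)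
    (hK : IsCompact K) (hK'ne : K'.Nonempty) (hK' : IsCompact K') :
    (∀ F : E →ₗ[ℝ] ℝ, sSup (F '' K') ≤ sSup (F '' K)) ↔ K' ⊆ K :=
  ⟨fun h => hKconv.subset_of_forall_sSup_image_le hKne hK.isClosed hK' fun F => h F,
    fun hsub F => csSup_le_csSup (hK.image F.continuous_of_finiteDimensional).bddAbove
      (hK'ne.image F) (image_mono hsub)⟩

end SupportFunction

theorem Set.InjOn.image_sep_subset_image_sep_iff {α β : Type*} {f : α → β} {s : Set α}
    {p q : α → Prop} (hf : InjOn f s) :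
    f '' {x ∈ s | p x} ⊆ f '' {x ∈ s | q x} ↔ ∀ x ∈ s, p x → q x := by
  rw [hf.image_subset_image_iff (sep_subset _ _) (sep_subset _ _)]
  exact ⟨fun h x hx hp => (h ⟨hx, hp⟩).2, fun h x ⟨hx, hp⟩ => ⟨hx, h x hx hp⟩⟩

/-- Theorem 2 (abstract): with an injective analyzer `Z` and nonempty compact
convex achievable sets, `R` outperforms `R'` at all linear games factoring
through `Z` iff every strategy generable from `R'` is generable from `R`. -/
theorem stmt_8 {Res : Type*} {n : ℕ} (r : Res → Res → Prop)
    (Strat : Set Res) (Z : Res → EuclideanSpace ℝ (Fin n))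
    (hZ : ∀ E ∈ Strat, ∀ E' ∈ Strat, Z E = Z E' → E = E')
    (S : Res → Set (EuclideanSpace ℝ (Fin n)))
    (hS : ∀ Q, S Q = {p | ∃ E ∈ Strat, r Q E ∧ Z E = p})
    (hne : ∀ Q, (S Q).Nonempty) (hcpt : ∀ Q, IsCompact (S Q))
    (hconv : ∀ Q, Convex ℝ (S Q)) (R R' : Res) :
    (∀ F : EuclideanSpace ℝ (Fin n) →ₗ[ℝ] ℝ,
        sSup (F '' S R') ≤ sSup (F '' S R)) ↔
    (∀ E ∈ Strat, r R' E → r R E) := by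
  have hS_image : ∀ Q, S Q = Z '' {E ∈ Strat | r Q E} := fun Q => by
    rw [hS]
    ext
    simp [and_assoc]
  have hZ_inj : InjOn Z Strat := fun E hE E' hE' => hZ E hE E' hE'
  rw [(hconv R).forall_sSup_image_le_iff_subset (hne R) (hcpt R) (hne R') (hcpt R'),
    hS_image, hS_image, hZ_inj.image_sep_subset_image_sep_iff]
end

section
/- Theorem (higher-type games characterize the preorder of lower types): Suppose type T encodes type T', i.e. for every resource R' of type T' there exists a strategy E of type T with R' ⪰ E and E ⪰ R'. Suppose further (as in Theorem 2) that for all resources R₁, R₂: R₁ ⪰_{G_T} R₂ implies (∀ E of type T, R₂ ⪰ E → R₁ ⪰ E). Then for resources R₁, R₂ of type T': R₁ ⪰ R₂ if and only if R₁ ⪰_{G_T} R₂. -/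
/-- Theorem 3 (abstract): if type `T` encodes type `T'`, and outperformance at
all `T`-games implies the ability to generate the same `T`-strategies, then for
resources of type `T'` the free preorder and the game preorder coincide. -/
theorem stmt_9 {Res TypeLabels : Type*} (r : Res → Res → Prop)
    (htrans : Transitive r) (gt : Res → Res → Prop)
    (ty : Res → TypeLabels) (Strat : Set Res) (T' : TypeLabels)
    (hmono : ∀ R₁ R₂, r R₁ R₂ → gt R₁ R₂)
    (hgen : ∀ R₁ R₂, gt R₁ R₂ → ∀ E ∈ Strat, r R₂ E → r R₁ E)
    (henc : ∀ R', ty R' = T' → ∃ E ∈ Strat, r R' E ∧ r E R') :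
    ∀ R₁ R₂, ty R₁ = T' → ty R₂ = T' → (r R₁ R₂ ↔ gt R₁ R₂) := by
  intro R₁ R₂ _ hR₂
  refine ⟨hmono R₁ R₂, fun hgt => ?_⟩
  obtain ⟨E, hE, hR₂E, hER₂⟩ := henc R₂ hR₂
  exact htrans (hgen R₁ R₂ hgt E hE hR₂E) hER₂
end
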